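/- If U and V are unitary operators on a finite-dimensional complex Hilbert space and ‖U - V‖ ≤ B ≤ 2 (operator norm), then every eigenvalue e^{-itλ} of the unitary UV† (with λ chosen so that -π/t ≤ λ ≤ π/t, t > 0) satisfies |λ| ≤ (1/t)·arccos(1 - B²/2). -/

import Mathlib

open Matrix NormedSpace ComplexOrder

noncomputable def opNorm {n : ℕ} (A : Matrix (Fin n) (Fin n) ℂ) : ℝ :=
  ‖(Matrix.toEuclideanCLM (𝕜 := ℂ) A : EuclideanSpace ℂ (Fin n) →L[ℂ] EuclideanSpace ℂ (Fin n))‖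

noncomputable def traceNorm {n : ℕ} (A : Matrix (Fin n) (Fin n) ℂ) : ℝ :=
  (((Matrix.posSemidef_conjTranspose_mul_self A).1.eigenvectorUnitary.1 *
    diagonal (((↑) : ℝ → ℂ) ∘ (Real.sqrt ·) ∘ (Matrix.posSemidef_conjTranspose_mul_self A).1.eigenvalues) *
    (star (Matrix.posSemidef_conjTranspose_mul_self A).1.eigenvectorUnitary : Matrix (Fin n) (Fin n) ℂ)).trace).re

def IsDensity {n : ℕ} (ρ : Matrix (Fin n) (Fin n) ℂ) : Prop := ρ.PosSemidef ∧ ρ.trace = 1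

/-!
Since `U V† - 1 = (U - V) V†` and `V†` is unitary, every eigenvalue `μ` of `U V†` satisfies
`|μ - 1| ≤ ‖U - V‖ ≤ B`. For `μ = e^{-iθ}` with `|θ| ≤ π` this reads `2 - 2 cos θ ≤ B²`, and
`arccos` inverts `cos` on `[0, π]`, giving `|θ| ≤ arccos (1 - B²/2)`; finally `θ = t λ`.
-/

open Complex in
theorem norm_exp_mul_I_sub_one_sq (θ : ℝ) :
    ‖cexp (θ * I) - 1‖ ^ 2 = 2 - 2 * Real.cos θ := by
  rw [exp_mul_I, ← ofReal_cos, ← ofReal_sin, Complex.sq_norm, normSq_apply]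
  simp only [sub_re, add_re, ofReal_re, mul_re, I_re, I_im, ofReal_im, one_re, sub_im, add_im,
    mul_im, one_im]
  nlinarith [Real.sin_sq_add_cos_sq θ]

theorem abs_le_arccos_of_norm_exp_mul_I_sub_one_le {θ B : ℝ} (hθ : |θ| ≤ Real.pi)
    (h : ‖Complex.exp (θ * Complex.I) - 1‖ ≤ B) : |θ| ≤ Real.arccos (1 - B ^ 2 / 2) := by
  have hsq : ‖Complex.exp (θ * Complex.I) - 1‖ ^ 2 ≤ B ^ 2 :=
    pow_le_pow_left₀ (norm_nonneg _) h 2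
  have hcos : 1 - B ^ 2 / 2 ≤ Real.cos |θ| := by
    rw [Real.cos_abs]
    linarith [norm_exp_mul_I_sub_one_sq θ]
  calc |θ| = Real.arccos (Real.cos |θ|) := (Real.arccos_cos (abs_nonneg θ) hθ).symm
    _ ≤ Real.arccos (1 - B ^ 2 / 2) := Real.arccos_le_arccos hcos

theorem norm_le_opNorm_of_mulVec_eq_smul {n : ℕ} {A : Matrix (Fin n) (Fin n) ℂ} {μ : ℂ}
    {v : Fin n → ℂ} (hv : v ≠ 0) (h : A *ᵥ v = μ • v) : ‖μ‖ ≤ opNorm A := by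
  set x : EuclideanSpace ℂ (Fin n) := WithLp.toLp 2 v
  have hx : 0 < ‖x‖ := norm_pos_iff.mpr (by simpa [x] using hv)
  have happly : Matrix.toEuclideanCLM (𝕜 := ℂ) A x = μ • x := by
    rw [Matrix.toEuclideanCLM_toLp, h, WithLp.toLp_smul]
  refine le_of_mul_le_mul_right ?_ hx
  calc ‖μ‖ * ‖x‖ = ‖Matrix.toEuclideanCLM (𝕜 := ℂ) A x‖ := by rw [happly, norm_smul]
    _ ≤ opNorm A * ‖x‖ := ContinuousLinearMap.le_opNorm _ x

theorem opNorm_mul_of_mem_unitaryGroup {n : ℕ} (A : Matrix (Fin n) (Fin n) ℂ)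
    {W : Matrix (Fin n) (Fin n) ℂ} (hW : W ∈ unitaryGroup (Fin n) ℂ) :
    opNorm (A * W) = opNorm A := by
  unfold opNorm
  rw [map_mul]
  exact CStarRing.norm_mul_mem_unitary _ (Unitary.map_mem _ hW)

theorem norm_sub_one_le_opNorm_sub_of_mulVec_eq_smul {n : ℕ} {U V : Matrix (Fin n) (Fin n) ℂ}
    (hV : V ∈ unitaryGroup (Fin n) ℂ) {μ : ℂ} {v : Fin n → ℂ} (hv : v ≠ 0)
    (h : (U * Vᴴ) *ᵥ v = μ • v) : ‖μ - 1‖ ≤ opNorm (U - V) := by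
  have hVVh : V * Vᴴ = 1 := by
    simpa [star_eq_conjTranspose] using mem_unitaryGroup_iff.mp hV
  have hVh : Vᴴ ∈ unitaryGroup (Fin n) ℂ := by
    simpa [star_eq_conjTranspose] using Unitary.star_mem hV
  calc ‖μ - 1‖ ≤ opNorm (U * Vᴴ - 1) :=
        norm_le_opNorm_of_mulVec_eq_smul hv (by rw [sub_mulVec, h, one_mulVec, sub_smul, one_smul])
    _ = opNorm (U - V) := by
        rw [← hVVh, ← sub_mul, opNorm_mul_of_mem_unitaryGroup _ hVh]

theorem stmt0_general {n : ℕ} (U V : Matrix (Fin n) (Fin n) ℂ)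
    (hV : V ∈ Matrix.unitaryGroup (Fin n) ℂ)
    (t B : ℝ) (ht : 0 < t) (hUV : opNorm (U - V) ≤ B)
    (lam : ℝ) (hlo : -(Real.pi / t) ≤ lam) (hhi : lam ≤ Real.pi / t)
    (v : Fin n → ℂ) (hv : v ≠ 0)
    (heig : (U * Vᴴ) *ᵥ v = Complex.exp (-(Complex.I * t * lam)) • v) :
    |lam| ≤ (1 / t) * Real.arccos (1 - B ^ 2 / 2) := by
  have hexp : Complex.exp (-(Complex.I * t * lam)) = Complex.exp (↑(-(t * lam)) * Complex.I) := by
    push_cast; ring_nf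
  have hnorm := (norm_sub_one_le_opNorm_sub_of_mulVec_eq_smul hV hv heig).trans hUV
  have hθ : |-(t * lam)| ≤ Real.pi := by
    rw [abs_neg, abs_mul, abs_of_pos ht, ← le_div_iff₀' ht, abs_le]
    exact ⟨hlo, hhi⟩
  have hbound := abs_le_arccos_of_norm_exp_mul_I_sub_one_le hθ (hexp ▸ hnorm)
  rw [abs_neg, abs_mul, abs_of_pos ht] at hbound
  rw [one_div, inv_mul_eq_div, le_div_iff₀' ht]
  exact hbound

/-- if U, V are unitary, ‖U - V‖ ≤ B ≤ 2, t > 0, and e^{-itλ} is an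
eigenvalue of U V† with -π/t ≤ λ ≤ π/t, then |λ| ≤ (1/t)·arccos(1 - B²/2). -/
theorem stmt0 {n : ℕ} (U V : Matrix (Fin n) (Fin n) ℂ)
    (hU : U ∈ Matrix.unitaryGroup (Fin n) ℂ) (hV : V ∈ Matrix.unitaryGroup (Fin n) ℂ)
    (t B : ℝ) (ht : 0 < t) (hUV : opNorm (U - V) ≤ B) (hB2 : B ≤ 2)
    (lam : ℝ) (hlo : -(Real.pi / t) ≤ lam) (hhi : lam ≤ Real.pi / t)
    (v : Fin n → ℂ) (hv : v ≠ 0)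
    (heig : (U * Vᴴ) *ᵥ v = Complex.exp (-(Complex.I * t * lam)) • v) :
    |lam| ≤ (1 / t) * Real.arccos (1 - B ^ 2 / 2) :=
  stmt0_general U V hV t B ht hUV lam hlo hhi v hv heig
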